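/- arXiv:2305.18720 — 8 statements merged into one kernel-verified Lean document; each statement's English description precedes it below -/
import Mathlib

section
/- For b > c > 0 and q_a < q2 < 1 where q_a = (b - c)c/(b² + bc - c²), the inequality h_{Aa}(q2) > h_a(q2) holds, where h_{Aa}(q2) = (b - c)(1 - q2)/c and h_a(q2) = (bq2 - c)(1 - q2)/[b(1 - q2) + c]. -/
/-- For `b > c > 0` and `q_a < q2 < 1` where `q_a = (b-c)c/(b² + bc - c²)`, the inequality
`h_{Aa}(q2) > h_a(q2)` holds, where `h_{Aa}(q2) = (b-c)(1-q2)/c` and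
`h_a(q2) = (b q2 - c)(1 - q2)/[b(1 - q2) + c]`. -/
theorem stmt_3 (b c q2 : ℝ) (hc : 0 < c) (hbc : c < b)
    (hq2l : (b - c) * c / (b ^ 2 + b * c - c ^ 2) < q2) (hq2u : q2 < 1) :
    (b * q2 - c) * (1 - q2) / (b * (1 - q2) + c) < (b - c) * (1 - q2) / c := by
  have hd : 0 < b * (1 - q2) + c := by nlinarith
  rw [div_lt_div_iff₀ hd hc]
  have hb : 0 < b := hc.trans hbc
  have h1 : 0 < 1 - q2 := by linarith
  nlinarith [mul_pos (mul_pos hb h1) (mul_pos hb h1)]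
end

section
/- Against a class A unbending strategy with q4 ≤ h_{Aa}(q2) = (b - c)(1 - q2)/c, the payoff difference s_X(p1, p2) - s_X(1, p2) = (1 - p1)Δ(p1, p2)/f_A(p1, p2) is ≤ 0 for all (p1, p2) ∈ [0,1]×[0,1), so the maximum of s_X is achieved at p1 = 1. -/
/-- Against a class A unbending strategy with `q4 ≤ h_{Aa}(q2) = (b - c)(1 - q2)/c`, the payoff
difference `s_X(p1,p2) - s_X(1,p2) = (1 - p1)Δ(p1,p2)/f_A(p1,p2)` is `≤ 0` for all
`(p1, p2) ∈ [0,1]×[0,1)`. -/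
theorem stmt_7 (b c q2 q4 : ℝ) (hc : 0 < c) (hbc : c < b)
    (hq2 : 0 < q2) (hq2' : q2 < 1) (hq4 : 0 < q4) (hq4' : q4 ≤ 1)
    (hAa : q4 ≤ (b - c) * (1 - q2) / c) :
    ∀ p1 ∈ Set.Icc (0 : ℝ) 1, ∀ p2 ∈ Set.Ico (0 : ℝ) 1,
      (1 - p1) *
          ((b * q2 * q4 + c * (1 - q2) - (b - c) * q4) * (1 - p2)
            - b * (1 - q2) * (q4 * p1 + 1 - q4)) /
        ((1 - q2) * ((1 - p1) - q4 * (p2 - p1) ^ 2) + q4 * (1 - p2)) ≤ 0 := by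
  intro p1 hp1 p2 hp2
  obtain ⟨h0, h1⟩ := hp1
  obtain ⟨h2, h3⟩ := hp2
  have hb : 0 < b := hc.trans hbc
  have hAa' : c * q4 ≤ (b - c) * (1 - q2) := by
    rw [le_div_iff₀ hc] at hAa
    linarith
  have hden : 0 < (1 - q2) * ((1 - p1) - q4 * (p2 - p1) ^ 2) + q4 * (1 - p2) := by
    nlinarith [mul_nonneg (mul_nonneg (mul_nonneg (sub_nonneg.mpr hq2'.le) hq4.le) h0)
        (sub_nonneg.mpr h1),
      mul_nonneg (mul_nonneg (mul_nonneg (sub_nonneg.mpr hq2'.le) hq4.le) (sub_nonneg.mpr h3.le))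
        h2,
      mul_nonneg (mul_nonneg (mul_nonneg (sub_nonneg.mpr hq2'.le) hq4.le) (sub_nonneg.mpr h1))
        (sub_nonneg.mpr h3.le),
      mul_nonneg (mul_nonneg (sub_nonneg.mpr hq2'.le) (sub_nonneg.mpr hq4')) (sub_nonneg.mpr h1),
      mul_pos (mul_pos hq4 (sub_pos.mpr h3)) hq2]
  have hK : b * q2 * q4 + c * (1 - q2) - (b - c) * q4 ≤ b * (1 - q2) * (1 - q4) := by
    nlinarith
  have hnum : (1 - p1) *
      ((b * q2 * q4 + c * (1 - q2) - (b - c) * q4) * (1 - p2)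
        - b * (1 - q2) * (q4 * p1 + 1 - q4)) ≤ 0 := by
    have hΔ : (b * q2 * q4 + c * (1 - q2) - (b - c) * q4) * (1 - p2)
        - b * (1 - q2) * (q4 * p1 + 1 - q4) ≤ 0 := by
      nlinarith [mul_nonneg (sub_nonneg.mpr hK) (sub_nonneg.mpr h3.le),
        mul_nonneg (mul_nonneg (mul_nonneg hb.le (sub_nonneg.mpr hq2'.le))
          (sub_nonneg.mpr hq4')) h2,
        mul_nonneg (mul_nonneg (mul_nonneg hb.le (sub_nonneg.mpr hq2'.le)) hq4.le) h0]
    exact mul_nonpos_of_nonneg_of_nonpos (sub_nonneg.mpr h1) hΔ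
  exact div_nonpos_of_nonpos_of_nonneg hnum hden.le
end

section
/- The equation h_A(q2) = h_{Aa}(q2) has exactly the solutions q2 = 1 and q2 = q_A := b(b - c)/c² among real q2, where h_{Aa}(q2) = (b - c)(1 - q2)/c and h_A(q2) = (b - c)(1 - q2)[(b² + bc - c²)q2 - (b - c)c] / [bc²q2² - (b - c)(b² - bc - c²)q2 + (b - c)²(b + c)]. -/
/-- The equation `h_A(q2) = h_{Aa}(q2)` has exactly the solutions `q2 = 1` and
`q2 = q_A = b(b - c)/c²`, where `h_{Aa}(q2) = (b - c)(1 - q2)/c` and `h_A` is as in the paper,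
assuming the denominator of `h_A` is nonzero at the point considered. -/
theorem stmt_8 (b c q2 : ℝ) (hc : 0 < c) (hbc : c < b)
    (hden : b * c ^ 2 * q2 ^ 2 - (b - c) * (b ^ 2 - b * c - c ^ 2) * q2
      + (b - c) ^ 2 * (b + c) ≠ 0) :
    (b - c) * (1 - q2) * ((b ^ 2 + b * c - c ^ 2) * q2 - (b - c) * c) /
        (b * c ^ 2 * q2 ^ 2 - (b - c) * (b ^ 2 - b * c - c ^ 2) * q2
          + (b - c) ^ 2 * (b + c))
      = (b - c) * (1 - q2) / c
    ↔ q2 = 1 ∨ q2 = b * (b - c) / c ^ 2 := by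
  have hc0 : c ≠ 0 := hc.ne'
  have hb0 : b ≠ 0 := by linarith
  have hbm : b - c ≠ 0 := by linarith
  rw [div_eq_div_iff hden hc0]
  constructor
  · intro h
    have key : b * (b - c) * (1 - q2) ^ 2 * (c ^ 2 * q2 - b * (b - c)) = 0 := by
      linear_combination h
    rcases mul_eq_zero.1 key with h1 | h2
    · rcases mul_eq_zero.1 h1 with h3 | h4
      · exact absurd h3 (mul_ne_zero hb0 hbm)
      · left
        have := pow_eq_zero_iff (n := 2) (by norm_num) |>.1 h4
        linarith
    · right
      field_simp
      linarith
  · rintro (rfl | rfl)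
    · ring
    · field_simp
      ring
end

section
/- In the coefficients of g_A(p1, p2) = e2 p1² + e1 p1 + e0 (the numerator of ∂s_X/∂p1 up to the positive factor (1 - p2)q4/f_A²), we have e2 < 0 and 2e2 + e1 = 2b(1 - q2)q4[p2 + q2(1 - p2)] > 0, so the parabola p1 ↦ g_A(p1, p2) opens downward with axis of symmetry at p1 = -e1/(2e2) > 1. -/
/-- For the coefficients of `g_A(p1, p2) = e2 p1² + e1 p1 + e0` with
`e2 = -(1 - q2)[b(1 - q2) + c]q4 - c(1 - q2)²` and
`e1 = 2(1 - q2)[b(1 - q2)p2 + b + c]q4 + 2c(1 - q2)²`, we have `e2 < 0` and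
`2e2 + e1 = 2b(1 - q2)q4[p2 + q2(1 - p2)] > 0`, so the parabola opens downward with axis of
symmetry `-e1/(2e2) > 1`. -/
theorem stmt_11 (b c q2 q4 p2 : ℝ) (hc : 0 < c) (hbc : c < b)
    (hq2 : 0 < q2) (hq2' : q2 < 1) (hq4 : 0 < q4) (hq4' : q4 ≤ 1)
    (hp2 : 0 ≤ p2) (hp2' : p2 < 1) :
    let e2 : ℝ := -(1 - q2) * (b * (1 - q2) + c) * q4 - c * (1 - q2) ^ 2
    let e1 : ℝ := 2 * (1 - q2) * (b * (1 - q2) * p2 + b + c) * q4 + 2 * c * (1 - q2) ^ 2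
    e2 < 0 ∧
    2 * e2 + e1 = 2 * b * (1 - q2) * q4 * (p2 + q2 * (1 - p2)) ∧
    0 < 2 * e2 + e1 ∧
    1 < -e1 / (2 * e2) := by
  intro e2 e1
  have h1 : (0:ℝ) < 1 - q2 := by linarith
  have hb : 0 < b := lt_trans hc hbc
  have he2 : e2 < 0 := by
    have : 0 < (1 - q2) * (b * (1 - q2) + c) * q4 := by positivity
    have : 0 < c * (1 - q2) ^ 2 := by positivity
    simp only [e2]; linarith
  have heq : 2 * e2 + e1 = 2 * b * (1 - q2) * q4 * (p2 + q2 * (1 - p2)) := by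
    simp only [e2, e1]; ring
  have hpos : 0 < 2 * e2 + e1 := by
    rw [heq]
    have : 0 < p2 + q2 * (1 - p2) := by nlinarith
    positivity
  refine ⟨he2, heq, hpos, ?_⟩
  rw [lt_div_iff_of_neg (by linarith : 2 * e2 < 0)]
  linarith
end

section
/- At (p1, p2) = (0, 0), the partial derivative of the reactive player's payoff against a class A unbending strategy equals [b(1 - q2) + c][h_a(q2) - q4]q4 / (1 - q2 + q4)², where h_a(q2) = (bq2 - c)(1 - q2)/[b(1 - q2) + c]; in particular its sign equals the sign of h_a(q2) - q4. -/
/-- The expected stationary payoff of the reactive player `p = [p1, p2, p1, p2]` against the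
class A unbending strategy `q = [1, q2, 0, q4]` in the donation game, given by the
Press–Dyson determinant formula. -/
noncomputable def sX (b c q2 q4 p1 p2 : ℝ) : ℝ :=
  Matrix.det !![p1 * 1 - 1, p1 - 1, 1 - 1, b - c;
                p2 * 0,     p2 - 1, 0,     -c;
                p1 * q2,    p1,     q2 - 1, b;
                p2 * q4,    p2,     q4,     0] /
  Matrix.det !![p1 * 1 - 1, p1 - 1, 1 - 1, 1;
                p2 * 0,     p2 - 1, 0,     1;
                p1 * q2,    p1,     q2 - 1, 1;
                p2 * q4,    p2,     q4,     1]

/-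
Against `p2 = 0` both Press–Dyson determinants are quadratic in `p1`, so the payoff is a ratio of
quadratics and the quotient rule at `0` only sees their constant and linear coefficients. The
result factors as the positive quantity `(b(1 - q2) + c) q4 / (1 - q2 + q4)²` times
`h_a(q2) - q4`.
-/
lemma Real.sign_mul_of_pos {k : ℝ} (hk : 0 < k) (x : ℝ) : Real.sign (k * x) = Real.sign x := by
  rcases lt_trichotomy x 0 with hx | rfl | hx
  · rw [Real.sign_of_neg hx, Real.sign_of_neg (mul_neg_of_pos_of_neg hk hx)]
  · simp
  · rw [Real.sign_of_pos hx, Real.sign_of_pos (mul_pos hk hx)]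

lemma hasDerivAt_quadratic_div_quadratic_zero (a₂ a₁ a₀ b₂ b₁ b₀ : ℝ) (hb₀ : b₀ ≠ 0) :
    HasDerivAt (fun t : ℝ => (a₂ * t ^ 2 + a₁ * t + a₀) / (b₂ * t ^ 2 + b₁ * t + b₀))
      ((a₁ * b₀ - a₀ * b₁) / b₀ ^ 2) 0 := by
  have quadratic (e₂ e₁ e₀ : ℝ) :
      HasDerivAt (fun t : ℝ => e₂ * t ^ 2 + e₁ * t + e₀) e₁ 0 := by
    simpa using ((((hasDerivAt_id (0 : ℝ)).pow 2).const_mul e₂).add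
      ((hasDerivAt_id (0 : ℝ)).const_mul e₁)).add_const e₀
  exact ((quadratic a₂ a₁ a₀).div (quadratic b₂ b₁ b₀) (by simpa using hb₀)).congr_deriv (by simp)

lemma sX_p2_zero (b c q2 q4 p1 : ℝ) :
    sX b c q2 q4 p1 0 =
      (c * q4 * (q2 - 1) * p1 ^ 2 + q4 * (b * (1 - q2) + c) * p1 + -(b * q4)) /
        (q4 * (1 - q2) * p1 ^ 2 + (1 - q2) * p1 + -(1 - q2 + q4)) := by
  rw [sX, Matrix.det_succ_row_zero, Matrix.det_succ_row_zero]
  simp [Fin.sum_univ_four, Matrix.det_fin_three, Fin.succAbove]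
  ring

theorem stmt_13_general (b c q2 q4 : ℝ) (hc : 0 < c) (hbc : c < b)
    (hq2u : q2 < 1)
    (hq4 : 0 < q4) :
    deriv (fun p1 => sX b c q2 q4 p1 0) 0 =
      (b * (1 - q2) + c) *
        ((b * q2 - c) * (1 - q2) / (b * (1 - q2) + c) - q4) * q4 / (1 - q2 + q4) ^ 2 ∧
    Real.sign (deriv (fun p1 => sX b c q2 q4 p1 0) 0) =
      Real.sign ((b * q2 - c) * (1 - q2) / (b * (1 - q2) + c) - q4) := by
  have hD0 : 0 < 1 - q2 + q4 := by linarith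
  have hK : 0 < b * (1 - q2) + c := by nlinarith
  have hderiv : deriv (fun p1 => sX b c q2 q4 p1 0) 0 =
      (b * (1 - q2) + c) *
        ((b * q2 - c) * (1 - q2) / (b * (1 - q2) + c) - q4) * q4 / (1 - q2 + q4) ^ 2 := by
    simp_rw [sX_p2_zero]
    rw [(hasDerivAt_quadratic_div_quadratic_zero _ _ _ _ _ _ (by linarith)).deriv]
    field_simp
    ring
  refine ⟨hderiv, ?_⟩
  rw [hderiv, show ∀ x : ℝ, (b * (1 - q2) + c) * x * q4 / (1 - q2 + q4) ^ 2 =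
      ((b * (1 - q2) + c) * q4 / (1 - q2 + q4) ^ 2) * x from fun x => by ring]
  exact Real.sign_mul_of_pos (by positivity) _

/-- At `(p1, p2) = (0, 0)`, the partial derivative of the reactive player's payoff against a
class A unbending strategy equals `[b(1 - q2) + c][h_a(q2) - q4]q4 / (1 - q2 + q4)²`, where
`h_a(q2) = (b q2 - c)(1 - q2)/[b(1 - q2) + c]`; in particular its sign equals the sign of
`h_a(q2) - q4`. -/
theorem stmt_13 (b c q2 q4 : ℝ) (hc : 0 < c) (hbc : c < b)
    (hq2l : (b - c) * c / (b ^ 2 + b * c - c ^ 2) < q2) (hq2u : q2 < 1)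
    (hq4 : 0 < q4)
    (hq4' : q4 ≤ (b - c) * (1 - q2) * ((b ^ 2 + b * c - c ^ 2) * q2 - (b - c) * c) /
      (b * c ^ 2 * q2 ^ 2 - (b - c) * (b ^ 2 - b * c - c ^ 2) * q2
        + (b - c) ^ 2 * (b + c))) :
    deriv (fun p1 => sX b c q2 q4 p1 0) 0 =
      (b * (1 - q2) + c) *
        ((b * q2 - c) * (1 - q2) / (b * (1 - q2) + c) - q4) * q4 / (1 - q2 + q4) ^ 2 ∧
    Real.sign (deriv (fun p1 => sX b c q2 q4 p1 0) 0) =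
      Real.sign ((b * q2 - c) * (1 - q2) / (b * (1 - q2) + c) - q4) :=
  stmt_13_general b c q2 q4 hc hbc hq2u hq4
end

section
/- For class A unbending strategies, s_X(0, 0) = bq4/(1 - q2 + q4) > b - c = s_X(1, p2) if and only if q4 > h_{Aa}(q2) = (b - c)(1 - q2)/c. -/
/-- For class A unbending strategies, `s_X(0,0) = b q4/(1 - q2 + q4) > b - c = s_X(1, p2)` if
and only if `q4 > h_{Aa}(q2) = (b - c)(1 - q2)/c`. -/
theorem stmt_15 (b c q2 q4 : ℝ) (hc : 0 < c) (hbc : c < b)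
    (hq2 : 0 < q2) (hq2' : q2 < 1) (hq4 : 0 < q4) (hq4' : q4 ≤ 1) :
    b * q4 / (1 - q2 + q4) > b - c ↔ q4 > (b - c) * (1 - q2) / c := by
  have hd : 0 < 1 - q2 + q4 := by linarith
  rw [gt_iff_lt, gt_iff_lt, lt_div_iff₀ hd, div_lt_iff₀ hc]
  constructor <;> intro h <;> nlinarith
end

section
/- Against a class D unbending strategy, ∂s_X/∂p1 = -[(q2 - q1)(1 - p2) + q3]·d_D/(∗∗)² is strictly positive for all p1, p2 ∈ [0,1], since d_D < 0 and (q2 - q1)(1 - p2) + q3 > q3 p2 ≥ 0. -/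
/-- Against a class D unbending strategy,
`∂s_X/∂p1 = -[(q2 - q1)(1 - p2) + q3]·d_D/(∗∗)²` is strictly positive for all
`p1, p2 ∈ [0,1]`, where `d_D = b(q2 - q1) + c(q3 - q1) + c < 0` and
`(∗∗) = 1 - q1 + q3 - (q2 - q1)(p2 - p1)`. -/
theorem stmt_18 (b c q1 q2 q3 q4 : ℝ) (hc : 0 < c) (hbc : c < b)
    (hq1 : q1 ∈ Set.Icc (0 : ℝ) 1) (hq2 : q2 ∈ Set.Icc (0 : ℝ) 1)
    (hq3 : q3 ∈ Set.Icc (0 : ℝ) 1) (hq4 : q4 ∈ Set.Icc (0 : ℝ) 1)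
    (h4 : q4 = q2 + q3 - q1)
    (hd : b * (q2 - q1) + c * (q3 - q1) + c < 0)
    (hpos : q2 + q3 - q1 > 0) :
    ∀ p1 ∈ Set.Icc (0 : ℝ) 1, ∀ p2 ∈ Set.Icc (0 : ℝ) 1,
      0 < -(((q2 - q1) * (1 - p2) + q3) * (b * (q2 - q1) + c * (q3 - q1) + c)) /
        (1 - q1 + q3 - (q2 - q1) * (p2 - p1)) ^ 2 := by
  obtain ⟨hq10, hq11⟩ := hq1
  obtain ⟨hq20, hq21⟩ := hq2
  obtain ⟨hq30, hq31⟩ := hq3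
  intro p1 ⟨hp10, hp11⟩ p2 ⟨hp20, hp21⟩
  have hA : q2 - q1 < 0 := by nlinarith
  have hB : 0 < q3 := by linarith
  have hnum : 0 < (q2 - q1) * (1 - p2) + q3 := by nlinarith
  have hden : 0 < 1 - q1 + q3 - (q2 - q1) * (p2 - p1) := by nlinarith
  apply div_pos
  · nlinarith
  · positivity
end

section
/- Against a class D unbending strategy, ∂s_X/∂p2 = -[(q2 - q1)p1 + 1 - q2]·d_D/(∗∗)² is nonnegative for all p1, p2 ∈ [0,1], with equality if and only if p1 = 1 and q1 = 1. -/
/-- Against a class D unbending strategy,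
`∂s_X/∂p2 = -[(q2 - q1)p1 + 1 - q2]·d_D/(∗∗)²` is nonnegative for all `p1, p2 ∈ [0,1]`,
with equality if and only if `p1 = 1` and `q1 = 1`, where
`d_D = b(q2 - q1) + c(q3 - q1) + c < 0` and `(∗∗) = 1 - q1 + q3 - (q2 - q1)(p2 - p1)`. -/
theorem stmt_19 (b c q1 q2 q3 q4 : ℝ) (hc : 0 < c) (hbc : c < b)
    (hq1 : q1 ∈ Set.Icc (0 : ℝ) 1) (hq2 : q2 ∈ Set.Icc (0 : ℝ) 1)
    (hq3 : q3 ∈ Set.Icc (0 : ℝ) 1) (hq4 : q4 ∈ Set.Icc (0 : ℝ) 1)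
    (h4 : q4 = q2 + q3 - q1)
    (hd : b * (q2 - q1) + c * (q3 - q1) + c < 0)
    (hpos : q2 + q3 - q1 > 0) :
    ∀ p1 ∈ Set.Icc (0 : ℝ) 1, ∀ p2 ∈ Set.Icc (0 : ℝ) 1,
      0 ≤ -(((q2 - q1) * p1 + 1 - q2) * (b * (q2 - q1) + c * (q3 - q1) + c)) /
          (1 - q1 + q3 - (q2 - q1) * (p2 - p1)) ^ 2 ∧
      (-(((q2 - q1) * p1 + 1 - q2) * (b * (q2 - q1) + c * (q3 - q1) + c)) /
          (1 - q1 + q3 - (q2 - q1) * (p2 - p1)) ^ 2 = 0 ↔ p1 = 1 ∧ q1 = 1) := by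
  intro p1 hp1 p2 hp2
  obtain ⟨hq10, hq11⟩ := hq1
  obtain ⟨hq20, hq21⟩ := hq2
  obtain ⟨hq30, hq31⟩ := hq3
  obtain ⟨hp10, hp11⟩ := hp1
  obtain ⟨hp20, hp21⟩ := hp2
  have hq21lt : q2 - q1 < 0 := by nlinarith
  have hA : 0 ≤ (q2 - q1) * p1 + 1 - q2 := by nlinarith
  have hss : 0 < 1 - q1 + q3 - (q2 - q1) * (p2 - p1) := by nlinarith
  have hsq : 0 < (1 - q1 + q3 - (q2 - q1) * (p2 - p1)) ^ 2 := by positivity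
  constructor
  · apply div_nonneg _ hsq.le
    nlinarith
  · constructor
    · intro h
      have hnum : -(((q2 - q1) * p1 + 1 - q2) * (b * (q2 - q1) + c * (q3 - q1) + c)) = 0 := by
        rcases div_eq_zero_iff.1 h with h' | h'
        · exact h'
        · exact absurd h' (by positivity)
      have hA0 : (q2 - q1) * p1 + 1 - q2 = 0 := by
        rcases mul_eq_zero.1 (neg_eq_zero.1 hnum) with h' | h'
        · exact h'
        · linarith
      have hq1e : q1 = 1 := by
        nlinarith [mul_nonneg (by linarith : (0:ℝ) ≤ q1 - q2) (by linarith : (0:ℝ) ≤ 1 - p1)]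
      refine ⟨?_, hq1e⟩
      subst hq1e
      have : (q2 - 1) * (p1 - 1) = 0 := by linarith
      rcases mul_eq_zero.1 this with h' | h'
      · linarith
      · linarith
    · rintro ⟨hp, hq⟩
      subst hp hq
      have h0 : ((q2 - 1) * 1 + 1 - q2 : ℝ) = 0 := by ring
      rw [h0]
      simp
end
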